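/- arXiv:2506.21264 — 8 statements merged into one kernel-verified Lean document; each statement's English description precedes it below -/
import Mathlib

section
/- Let E and F be Banach spaces, T : E → F a bounded linear operator, and L ⊆ E a closed subspace. If T has the Kato property for L (i.e., for every closed finite-codimensional subspace W of E containing L and every ε > 0 there exists u ∈ W \ L with ‖T u‖ ≤ ε ‖Q_L u‖, where Q_L : E → E/L is the quotient map), then the induced operator T̃_L : E/L → F/cl(T(L)), defined by T̃_L(Q_L u) = Q_{cl(T L)}(T u), has the Kato property (for the zero subspace). -/
open Submodule Topology TopologicalSpace

/-- `T` has the Kato property for the closed subspace `L`: for every closed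
finite-codimensional subspace `W ⊇ L` and every `ε > 0` there is `u ∈ W \ L`
with `‖T u‖ ≤ ε ‖Q_L u‖`. -/
def HasKatoPropFor {E F : Type*} [SeminormedAddCommGroup E] [NormedSpace ℝ E]
    [SeminormedAddCommGroup F] [NormedSpace ℝ F]
    (T : E →L[ℝ] F) (L : Submodule ℝ E) : Prop :=
  ∀ W : Submodule ℝ E, IsClosed (W : Set E) → L ≤ W →
    FiniteDimensional ℝ (E ⧸ W) → ∀ ε : ℝ, 0 < ε →
      ∃ u ∈ W, u ∉ L ∧ ‖T u‖ ≤ ε * ‖L.mkQ u‖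

/-- `T` has the Kato property (for the zero subspace). -/
def HasKatoProp {E F : Type*} [SeminormedAddCommGroup E] [NormedSpace ℝ E]
    [SeminormedAddCommGroup F] [NormedSpace ℝ F] (T : E →L[ℝ] F) : Prop :=
  ∀ W : Submodule ℝ E, IsClosed (W : Set E) →
    FiniteDimensional ℝ (E ⧸ W) → ∀ ε : ℝ, 0 < ε →
      ∃ u ∈ W, u ≠ 0 ∧ ‖T u‖ ≤ ε * ‖u‖

/-- `R` is an operator range in `E`: the image of a bounded linear operator
from some Banach space. -/
def IsOperatorRange {E : Type*} [NormedAddCommGroup E] [NormedSpace ℝ E]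
    (R : Submodule ℝ E) : Prop :=
  ∃ (G : Type) (_ : NormedAddCommGroup G) (_ : NormedSpace ℝ G) (_ : CompleteSpace G)
    (A : G →L[ℝ] E), LinearMap.range (A : G →ₗ[ℝ] E) = R

/-- A proper dense operator range: a dense operator range of infinite codimension. -/
def IsProperDenseOperatorRange {E : Type*} [NormedAddCommGroup E] [NormedSpace ℝ E]
    (R : Submodule ℝ E) : Prop :=
  IsOperatorRange R ∧ Dense (R : Set E) ∧ ¬ FiniteDimensional ℝ (E ⧸ R)

/-- `E` has an infinite-dimensional separable quotient. -/
def HasSepQuotient (E : Type*) [NormedAddCommGroup E] [NormedSpace ℝ E] : Prop :=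
  ∃ X : Submodule ℝ E, IsClosed (X : Set E) ∧
    TopologicalSpace.SeparableSpace (E ⧸ X) ∧ ¬ FiniteDimensional ℝ (E ⧸ X)

/-- A normalized basic sequence: norm-one terms and uniformly bounded basis
projections (so it is a Schauder basis of its closed linear span). -/
def IsNormalizedBasicSeq {V : Type*} [SeminormedAddCommGroup V] [NormedSpace ℝ V]
    (v : ℕ → V) : Prop :=
  (∀ n, ‖v n‖ = 1) ∧
  ∃ C : ℝ, 0 < C ∧ ∀ (a : ℕ → ℝ) (m n : ℕ), m ≤ n →
    ‖∑ i ∈ Finset.range m, a i • v i‖ ≤ C * ‖∑ i ∈ Finset.range n, a i • v i‖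

/-- `u` is a block sequence of `z`: each `u n` is a finite linear combination of
the `z i` over consecutive disjoint increasing index blocks. -/
def IsBlockSeq {E : Type*} [AddCommMonoid E] [Module ℝ E] (z u : ℕ → E) : Prop :=
  ∃ (p : ℕ → ℕ) (a : ℕ → ℝ), StrictMono p ∧
    ∀ n, u n = ∑ i ∈ Finset.Ico (p n) (p (n + 1)), a i • z i

/-- The restriction to the subspace `X` of the canonical quotient map `E → E ⧸ Y`,
as a continuous linear map. -/
noncomputable def quotRestrict {E : Type*} [NormedAddCommGroup E] [NormedSpace ℝ E]
    (X Y : Submodule ℝ E) : ↥X →L[ℝ] E ⧸ Y :=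
  { toLinearMap := Y.mkQ.comp X.subtype,
    cont := continuous_quot_mk.comp continuous_subtype_val }

/-! A closed finite-codimensional subspace `W` of `E ⧸ L` pulls back to the closed
finite-codimensional subspace `Q_L⁻¹(W) ⊇ L` of `E`. A vector `u ∈ Q_L⁻¹(W) \ L` given by the
Kato property of `T` for `L` maps to the nonzero vector `Q_L u ∈ W`, and
`‖T̃_L (Q_L u)‖ = ‖Q (T u)‖ ≤ ‖T u‖ ≤ ε ‖Q_L u‖` since quotient maps do not increase norms. -/

theorem Submodule.finite_quotient_comap_mkQ {R M : Type*} [Ring R] [AddCommGroup M] [Module R M]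
    (L : Submodule R M) (W : Submodule R (M ⧸ L)) [Module.Finite R ((M ⧸ L) ⧸ W)] :
    Module.Finite R (M ⧸ W.comap L.mkQ) := by
  have hker : (W.mkQ.comp L.mkQ).ker = W.comap L.mkQ := by
    rw [LinearMap.ker_comp, ker_mkQ]
  have hsurj : Function.Surjective (W.mkQ.comp L.mkQ) :=
    W.mkQ_surjective.comp L.mkQ_surjective
  rw [← hker]
  exact Module.Finite.equiv ((W.mkQ.comp L.mkQ).quotKerEquivOfSurjective hsurj).symm

theorem HasKatoPropFor.hasKatoProp_of_norm_le {E F G : Type*}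
    [SeminormedAddCommGroup E] [NormedSpace ℝ E] [SeminormedAddCommGroup F] [NormedSpace ℝ F]
    [SeminormedAddCommGroup G] [NormedSpace ℝ G]
    {T : E →L[ℝ] F} {L : Submodule ℝ E} (hT : HasKatoPropFor T L)
    (S : (E ⧸ L) →L[ℝ] G) (hS : ∀ u : E, ‖S (L.mkQ u)‖ ≤ ‖T u‖) :
    HasKatoProp S := by
  intro W hW hWfin ε hε
  have hL : L ≤ W.comap L.mkQ := fun x hx => by
    simp [(Submodule.Quotient.mk_eq_zero L).mpr hx]
  obtain ⟨u, huW, huL, hTu⟩ :=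
    hT (W.comap L.mkQ) (hW.preimage continuous_quot_mk) hL
      (L.finite_quotient_comap_mkQ W) ε hε
  refine ⟨L.mkQ u, huW, ?_, (hS u).trans hTu⟩
  simpa [Submodule.Quotient.mk_eq_zero] using huL

theorem stmt0_general {E F : Type*} [NormedAddCommGroup E] [NormedSpace ℝ E]
    [NormedAddCommGroup F] [NormedSpace ℝ F]
    (T : E →L[ℝ] F) (L : Submodule ℝ E)
    (hT : HasKatoPropFor T L)
    (S : (E ⧸ L) →L[ℝ] (F ⧸ (L.map (T : E →ₗ[ℝ] F)).topologicalClosure))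
    (hS : ∀ u : E, S (L.mkQ u) = ((L.map (T : E →ₗ[ℝ] F)).topologicalClosure).mkQ (T u)) :
    HasKatoProp S :=
  hT.hasKatoProp_of_norm_le S fun u => by
    rw [hS]
    exact Submodule.Quotient.norm_mk_le _ _

theorem stmt0 {E F : Type*} [NormedAddCommGroup E] [NormedSpace ℝ E] [CompleteSpace E]
    [NormedAddCommGroup F] [NormedSpace ℝ F] [CompleteSpace F]
    (T : E →L[ℝ] F) (L : Submodule ℝ E) (hL : IsClosed (L : Set E))
    (hT : HasKatoPropFor T L)
    (S : (E ⧸ L) →L[ℝ] (F ⧸ (L.map (T : E →ₗ[ℝ] F)).topologicalClosure))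
    (hS : ∀ u : E, S (L.mkQ u) = ((L.map (T : E →ₗ[ℝ] F)).topologicalClosure).mkQ (T u)) :
    HasKatoProp S :=
  stmt0_general T L hT S hS
end

section
/- Let E and F be Banach spaces, T : E → F a bounded linear operator, and L ⊆ E a closed subspace. Suppose there exist a sequence ε_n of positive reals converging to 0 and a sequence u_n ∈ E \ L such that the sequence Q_L(u_n) is a normalized basic sequence in E/L and ‖T u_n‖ ≤ ε_n for all n. Then T has the Kato property for L. -/
open Submodule Topology TopologicalSpace

/-!
Let `d` be the codimension of `W`. Any `d + 1` vectors `u N, …, u (N + d)` are linearly dependent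
modulo `W`, so some nontrivial combination `x` of them lies in `W`. Because `Q_L (u n)` is a
normalized basic sequence with constant `C`, every coefficient of `x` is at most `2C ‖Q_L x‖`;
in particular `Q_L x ≠ 0`, and `‖T x‖ ≤ (d + 1) · 2C ‖Q_L x‖ · sup_{n ≥ N} ε n`, which is
below any prescribed `η ‖Q_L x‖` once `N` is large.
-/

theorem Module.exists_nontrivial_relation_of_finrank_lt_finset_card
    {R M ι : Type*} [Ring R] [StrongRankCondition R] [AddCommGroup M] [Module R M]
    [Module.Finite R M] {f : ι → M} {s : Finset ι} (h : Module.finrank R M < s.card) :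
    ∃ g : ι → R, ∑ i ∈ s, g i • f i = 0 ∧ ∃ i ∈ s, g i ≠ 0 :=
  not_linearIndepOn_finset_iff.mp fun hs =>
    h.not_ge (by simpa using hs.fintype_card_le_finrank)

theorem norm_sum_smul_le_card_mul {V ι : Type*} [SeminormedAddCommGroup V] [NormedSpace ℝ V]
    {s : Finset ι} {g : ι → ℝ} {w : ι → V} {M δ : ℝ} (hg : ∀ i ∈ s, |g i| ≤ M)
    (hw : ∀ i ∈ s, ‖w i‖ ≤ δ) :
    ‖∑ i ∈ s, g i • w i‖ ≤ s.card * (M * δ) := by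
  refine (norm_sum_le _ _).trans ?_
  rw [← nsmul_eq_mul]
  refine Finset.sum_le_card_nsmul _ _ _ fun i hi => ?_
  rw [norm_smul, Real.norm_eq_abs]
  exact mul_le_mul (hg i hi) (hw i hi) (norm_nonneg _) ((abs_nonneg _).trans (hg i hi))

namespace IsNormalizedBasicSeq

variable {V : Type*} [SeminormedAddCommGroup V] [NormedSpace ℝ V] {v : ℕ → V}

theorem exists_abs_coeff_le (hv : IsNormalizedBasicSeq v) :
    ∃ K, 0 < K ∧ ∀ (s : Finset ℕ) (g : ℕ → ℝ), ∀ j ∈ s, |g j| ≤ K * ‖∑ i ∈ s, g i • v i‖ := by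
  obtain ⟨hnorm, C, hC, hproj⟩ := hv
  refine ⟨2 * C, by positivity, fun s g j hj => ?_⟩
  obtain ⟨n, hsn⟩ := s.exists_nat_subset_range
  set a : ℕ → ℝ := fun i => if i ∈ s then g i else 0
  set S : ℕ → V := fun m => ∑ i ∈ Finset.range m, a i • v i
  have hSn : S n = ∑ i ∈ s, g i • v i := by
    simp only [S, a, ite_smul, zero_smul, Finset.sum_ite_mem, Finset.inter_eq_right.mpr hsn]
  have hjn : j < n := Finset.mem_range.mp (hsn hj)
  have hSj : S (j + 1) - S j = g j • v j := by
    simp only [S, Finset.sum_range_succ, add_sub_cancel_left, a, if_pos hj]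
  calc |g j| = ‖S (j + 1) - S j‖ := by rw [hSj, norm_smul, hnorm, mul_one, Real.norm_eq_abs]
    _ ≤ ‖S (j + 1)‖ + ‖S j‖ := norm_sub_le _ _
    _ ≤ C * ‖S n‖ + C * ‖S n‖ := add_le_add (hproj a _ _ hjn) (hproj a _ _ hjn.le)
    _ = 2 * C * ‖∑ i ∈ s, g i • v i‖ := by rw [hSn]; ring

end IsNormalizedBasicSeq

theorem stmt1_general {E F : Type*} [NormedAddCommGroup E] [NormedSpace ℝ E]
    [NormedAddCommGroup F] [NormedSpace ℝ F]
    (T : E →L[ℝ] F) (L : Submodule ℝ E)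
    (ε : ℕ → ℝ) (hε0 : Filter.Tendsto ε Filter.atTop (nhds 0))
    (u : ℕ → E)
    (hb : IsNormalizedBasicSeq (fun n => L.mkQ (u n)))
    (hTu : ∀ n, ‖T (u n)‖ ≤ ε n) :
    HasKatoPropFor T L := by
  intro W _ _ _ η hη
  obtain ⟨K, hK, hcoef⟩ := hb.exists_abs_coeff_le
  set d := Module.finrank ℝ (E ⧸ W)
  set δ := η / ((d + 1) * K)
  obtain ⟨N, hN⟩ :=
    Filter.eventually_atTop.mp (hε0.eventually (gt_mem_nhds (by positivity : 0 < δ)))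
  set s := Finset.Ico N (N + (d + 1))
  obtain ⟨g, hgW, i₀, hi₀s, hi₀⟩ :=
    Module.exists_nontrivial_relation_of_finrank_lt_finset_card (R := ℝ) (f := fun n => W.mkQ (u n))
      (s := s) (by simp only [s, Nat.card_Ico]; omega)
  set x := ∑ i ∈ s, g i • u i
  have hQx : L.mkQ x = ∑ i ∈ s, g i • L.mkQ (u i) := by simp only [x, map_sum, map_smul]
  have hgx : ∀ i ∈ s, |g i| ≤ K * ‖L.mkQ x‖ := hQx ▸ hcoef s g
  have hxL : L.mkQ x ≠ 0 := fun h => hi₀ (abs_nonpos_iff.mp (by simpa [h] using hgx i₀ hi₀s))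
  refine ⟨x, ?_, fun h => hxL (by rwa [← L.ker_mkQ] at h), ?_⟩
  · rw [← W.ker_mkQ, LinearMap.mem_ker]
    simpa only [x, map_sum, map_smul] using hgW
  · calc ‖T x‖ = ‖∑ i ∈ s, g i • T (u i)‖ := by simp only [x, map_sum, map_smul]
      _ ≤ s.card * (K * ‖L.mkQ x‖ * δ) := norm_sum_smul_le_card_mul hgx
          fun i hi => (hTu i).trans (hN i (Finset.mem_Ico.mp hi).1).le
      _ = η * ‖L.mkQ x‖ := by
          rw [Nat.card_Ico, Nat.add_sub_cancel_left]; push_cast; simp only [δ]; field_simp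

theorem stmt1 {E F : Type*} [NormedAddCommGroup E] [NormedSpace ℝ E] [CompleteSpace E]
    [NormedAddCommGroup F] [NormedSpace ℝ F] [CompleteSpace F]
    (T : E →L[ℝ] F) (L : Submodule ℝ E) (hL : IsClosed (L : Set E))
    (ε : ℕ → ℝ) (hε : ∀ n, 0 < ε n) (hε0 : Filter.Tendsto ε Filter.atTop (nhds 0))
    (u : ℕ → E) (hu : ∀ n, u n ∉ L)
    (hb : IsNormalizedBasicSeq (fun n => L.mkQ (u n)))
    (hTu : ∀ n, ‖T (u n)‖ ≤ ε n) :
    HasKatoPropFor T L :=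
  stmt1_general T L ε hε0 u hb hTu
end

section
/- Let E and F be Banach spaces, T : E → F a bounded linear operator whose range T(E) is not closed, and M ⊆ T(E) a closed subspace of F. Then T has the Kato property for the subspace T⁻¹(M). -/
open Submodule Topology TopologicalSpace

/-! If the Kato property failed for some `W`, then `ε ‖Q_L u‖ ≤ ‖T u‖` on `W`, and since every
element of `M` is some `T v` with `v ∈ L ⊆ W`, even `ε ‖Q_L u‖ ≤ ‖Q_M (T u)‖` on `W`. So the
operator `E ⧸ L → F ⧸ M` induced by `T` is bounded below on the closed subspace `Q_L W`, whence
`Q_M (T W)` is closed. As `W` has finite codimension, the range of `Q_M ∘ T` is closed too, and its preimage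
`T E + M = T E` would be closed. -/

theorem ContinuousLinearMap.isClosed_map_of_le_norm_apply {𝕜 X G : Type*}
    [NontriviallyNormedField 𝕜] [NormedAddCommGroup X] [NormedSpace 𝕜 X] [CompleteSpace X]
    [NormedAddCommGroup G] [NormedSpace 𝕜 G] (B : X →L[𝕜] G) {V : Submodule 𝕜 X}
    (hV : IsClosed (V : Set X)) {c : ℝ} (hc : 0 < c) (hB : ∀ x ∈ V, c * ‖x‖ ≤ ‖B x‖) :
    IsClosed (V.map (B : X →ₗ[𝕜] G) : Set G) := by
  have : CompleteSpace V := hV.completeSpace_coe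
  have hanti : AntilipschitzWith ⟨c⁻¹, (inv_pos.2 hc).le⟩ (B ∘L V.subtypeL) :=
    (B ∘L V.subtypeL).antilipschitz_of_bound fun x => by
      show ‖x‖ ≤ c⁻¹ * ‖B x‖
      rw [← div_eq_inv_mul, le_div_iff₀' hc]
      exact hB x x.2
  convert hanti.isClosed_range (B ∘L V.subtypeL).uniformContinuous
  ext y
  simp

theorem Submodule.isClosed_map_mkQ {R E : Type*} [Ring R] [AddCommGroup E] [Module R E]
    [TopologicalSpace E] {L W : Submodule R E} (hW : IsClosed (W : Set E)) (hLW : L ≤ W) :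
    IsClosed (W.map L.mkQ : Set (E ⧸ L)) := by
  rw [← L.isQuotientMap_mkQL.isClosed_preimage, coe_mkQL, ← comap_coe, comap_map_mkQ,
    sup_eq_right.2 hLW]
  exact hW

theorem le_norm_mkQ_apply_of_le_norm_apply {R E F : Type*} [Ring R] [SeminormedAddCommGroup E]
    [Module R E] [SeminormedAddCommGroup F] [Module R F] (T : E →ₗ[R] F)
    {M : Submodule R F} (hMr : M ≤ LinearMap.range T) {W : Submodule R E}
    (hLW : M.comap T ≤ W) {ε : ℝ} (h : ∀ u ∈ W, ε * ‖(M.comap T).mkQ u‖ ≤ ‖T u‖)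
    {u : E} (hu : u ∈ W) : ε * ‖(M.comap T).mkQ u‖ ≤ ‖M.mkQ (T u)‖ := by
  have hnorm : ‖M.mkQ (T u)‖ = Metric.infDist (T u) M := QuotientAddGroup.norm_mk (T u)
  rw [hnorm, Metric.le_infDist ⟨0, M.zero_mem⟩]
  rintro _ hy
  obtain ⟨v, rfl⟩ := hMr hy
  have hv : v ∈ M.comap T := hy
  calc ε * ‖(M.comap T).mkQ u‖ = ε * ‖(M.comap T).mkQ (u - v)‖ := by
        rw [map_sub, mkQ_apply _ v, (Quotient.mk_eq_zero _).2 hv, sub_zero]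
    _ ≤ ‖T (u - v)‖ := h _ (W.sub_mem hu (hLW hv))
    _ = dist (T u) (T v) := by rw [map_sub, dist_eq_norm]

theorem isClosed_range_of_isClosed_range_mkQ_comp {R E F : Type*} [Ring R] [AddCommGroup E]
    [Module R E] [AddCommGroup F] [Module R F] [TopologicalSpace F] (T : E →ₗ[R] F)
    {M : Submodule R F} (hMr : M ≤ LinearMap.range T)
    (h : IsClosed (LinearMap.range (M.mkQ ∘ₗ T) : Set (F ⧸ M))) :
    IsClosed (LinearMap.range T : Set F) := by
  rw [← sup_eq_right.2 hMr, ← comap_map_mkQ, ← LinearMap.range_comp]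
  exact h.preimage continuous_quot_mk

theorem stmt2_general {E F : Type*} [NormedAddCommGroup E] [NormedSpace ℝ E] [CompleteSpace E]
    [NormedAddCommGroup F] [NormedSpace ℝ F]
    (T : E →L[ℝ] F) (hT : ¬ IsClosed (Set.range T))
    (M : Submodule ℝ F) (hM : IsClosed (M : Set F)) (hMr : (M : Set F) ⊆ Set.range T) :
    HasKatoPropFor T (M.comap (T : E →ₗ[ℝ] F)) := by
  intro W hW hLW hfin ε hε
  by_contra! hKato
  set L := M.comap (T : E →ₗ[ℝ] F)
  have hbound : ∀ u ∈ W, ε * ‖L.mkQ u‖ ≤ ‖T u‖ := fun u hu => by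
    by_cases huL : u ∈ L
    · simp [(Quotient.mk_eq_zero L).2 huL]
    · exact (hKato u hu huL).le
  have : IsClosed (L : Set E) := hM.preimage T.continuous
  let S : E ⧸ L →L[ℝ] F ⧸ M := L.liftQL (M.mkQL ∘L T) fun x hx => by simpa [L] using hx
  have hSW : IsClosed ((W.map L.mkQ).map (S : E ⧸ L →ₗ[ℝ] F ⧸ M) : Set (F ⧸ M)) :=
    S.isClosed_map_of_le_norm_apply (isClosed_map_mkQ hW hLW) hε <| by
      rintro _ ⟨u, hu, rfl⟩
      exact le_norm_mkQ_apply_of_le_norm_apply _ hMr hLW hbound hu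
  have hfactor : (S : E ⧸ L →ₗ[ℝ] F ⧸ M) ∘ₗ L.mkQ = M.mkQ ∘ₗ (T : E →ₗ[ℝ] F) := rfl
  rw [← map_comp, hfactor] at hSW
  exact hT <| isClosed_range_of_isClosed_range_mkQ_comp _ hMr
    (LinearMap.isClosed_range_of_isClosed_map_of_finiteDimensional_quotient hSW)

theorem stmt2 {E F : Type*} [NormedAddCommGroup E] [NormedSpace ℝ E] [CompleteSpace E]
    [NormedAddCommGroup F] [NormedSpace ℝ F] [CompleteSpace F]
    (T : E →L[ℝ] F) (hT : ¬ IsClosed (Set.range T))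
    (M : Submodule ℝ F) (hM : IsClosed (M : Set F)) (hMr : (M : Set F) ⊆ Set.range T) :
    HasKatoPropFor T (M.comap (T : E →ₗ[ℝ] F)) :=
  stmt2_general T hT M hM hMr
end

section
/- Let E be a Banach space and X, Y ⊆ E closed subspaces. Then X + Y is not closed in E if and only if the restriction to X of the canonical quotient map Q_Y : E → E/Y has the Kato property for the subspace X ∩ Y. -/
open Submodule Topology TopologicalSpace

/-!
A bounded operator `T : V → F` between Banach spaces has closed range iff it is bounded below
modulo its kernel, `ε ‖Q u‖ ≤ ‖T u‖` with `Q : V → V ⧸ ker T` (open mapping theorem in one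
direction, completeness of `V ⧸ ker T` in the other). A lower bound of this kind on a single
closed finite-codimensional `W ⊇ ker T` already suffices, because `T(V) = T(W) + T(G)` for a
finite-dimensional complement `G` of `W`. The negation of "such a bound holds on some `W`" is
precisely the Kato property for `ker T`.

For `T = Q_Y|_X` the kernel is `X ∩ Y` and `Q_Y⁻¹(T(X)) = X + Y`, so, `Q_Y` being a quotient map,
`T` has closed range iff `X + Y` is closed.
-/

namespace Submodule

variable {R M : Type*} [Ring R] [SeminormedAddCommGroup M] [Module R M]

theorem norm_mkQ_eq_infDist (L : Submodule R M) (x : M) : ‖L.mkQ x‖ = Metric.infDist x L :=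
  QuotientAddGroup.norm_mk x

theorem norm_mkQ_comap_subtype {L W : Submodule R M} (hLW : L ≤ W) (w : W) :
    ‖(L.comap W.subtype).mkQ w‖ = ‖L.mkQ (w : M)‖ := by
  have himg : W.subtype '' (L.comap W.subtype : Set W) = L := by
    rw [← map_coe, map_comap_subtype, inf_eq_right.mpr hLW]
  rw [norm_mkQ_eq_infDist, norm_mkQ_eq_infDist, ← himg]
  exact (Metric.infDist_image isometry_subtype_coe).symm

end Submodule

namespace ContinuousLinearMap

variable {V F : Type*} [NormedAddCommGroup V] [NormedAddCommGroup F] [CompleteSpace V]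
  [CompleteSpace F]

section NontriviallyNormedField

variable {𝕜 : Type*} [NontriviallyNormedField 𝕜] [NormedSpace 𝕜 V] [NormedSpace 𝕜 F]

theorem isClosed_range_iff_exists_mul_norm_mkQ_ker_le (T : V →L[𝕜] F) :
    IsClosed (Set.range T) ↔ ∃ ε > 0, ∀ v, ε * ‖T.ker.mkQ v‖ ≤ ‖T v‖ := by
  constructor
  · intro hcl
    have : CompleteSpace T.range := (show IsClosed (T.range : Set F) from hcl).completeSpace_coe
    obtain ⟨C, hC, hpre⟩ :=
      T.rangeRestrict.exists_preimage_norm_le T.toLinearMap.surjective_rangeRestrict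
    refine ⟨C⁻¹, inv_pos.2 hC, fun v => ?_⟩
    obtain ⟨x, hx, hxv⟩ := hpre (T.rangeRestrict v)
    have hTx : T x = T v := congrArg Subtype.val hx
    have hQ : T.ker.mkQ v = T.ker.mkQ x :=
      (Submodule.Quotient.eq _).2 (by simp [LinearMap.mem_ker, hTx])
    rw [hQ, inv_mul_le_iff₀ hC]
    exact (Submodule.Quotient.norm_mk_le _ x).trans hxv
  · rintro ⟨ε, hε, h⟩
    let T' := T.ker.liftQL T le_rfl
    have hanti : AntilipschitzWith (Real.toNNReal ε⁻¹) T' := by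
      refine T'.antilipschitz_of_bound fun q => ?_
      obtain ⟨v, rfl⟩ := T.ker.mkQ_surjective q
      rw [Real.coe_toNNReal _ (inv_nonneg.2 hε.le), ← div_eq_inv_mul, le_div_iff₀ hε, mul_comm]
      exact h v
    have hrange : Set.range T' = Set.range T := by
      rw [← coe_coe, ← coe_coe, ← LinearMap.coe_range, ← LinearMap.coe_range,
        Submodule.toLinearMap_liftQL, Submodule.range_liftQ]
    rw [← hrange]
    exact hanti.isClosed_range T'.uniformContinuous

theorem isClosed_range_of_mul_norm_mkQ_ker_le_on [CompleteSpace 𝕜] (T : V →L[𝕜] F)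
    {W : Submodule 𝕜 V} (hW : IsClosed (W : Set V)) [W.CoFG] (hker : T.ker ≤ W)
    {ε : ℝ} (hε : 0 < ε) (h : ∀ w ∈ W, ε * ‖T.ker.mkQ w‖ ≤ ‖T w‖) :
    IsClosed (Set.range T) := by
  have : CompleteSpace W := hW.completeSpace_coe
  let S := T ∘L W.subtypeL
  have hS : IsClosed (Set.range S) := by
    refine S.isClosed_range_iff_exists_mul_norm_mkQ_ker_le.2 ⟨ε, hε, fun w => ?_⟩
    have hSker : S.ker = T.ker.comap W.subtype := rfl
    rw [hSker, Submodule.norm_mkQ_comap_subtype hker]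
    exact h w w.2
  have hSrange : Set.range S = W.map T.toLinearMap := by
    ext y
    simp [S]
  rw [← coe_coe, ← LinearMap.coe_range]
  exact LinearMap.isClosed_range_of_isClosed_map_of_finiteDimensional_quotient (hSrange ▸ hS)

end NontriviallyNormedField

theorem not_isClosed_range_iff_hasKatoPropFor [NormedSpace ℝ V] [NormedSpace ℝ F]
    (T : V →L[ℝ] F) : ¬ IsClosed (Set.range T) ↔ HasKatoPropFor T T.ker := by
  constructor
  · intro hT W hW hker _ ε hε
    by_contra! hlarge
    refine hT (T.isClosed_range_of_mul_norm_mkQ_ker_le_on hW hker hε fun w hw => ?_)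
    by_cases hwker : w ∈ T.ker
    · simp [(Submodule.Quotient.mk_eq_zero _).2 hwker]
    · exact (hlarge w hw hwker).le
  · intro hKato hT
    obtain ⟨ε, hε, hbound⟩ := T.isClosed_range_iff_exists_mul_norm_mkQ_ker_le.1 hT
    obtain ⟨u, -, hu, hTu⟩ := hKato ⊤ isClosed_univ le_top inferInstance (ε / 2) (half_pos hε)
    have hQu : 0 < ‖T.ker.mkQ u‖ := by
      refine (norm_nonneg _).lt_of_ne' fun h0 => hu ?_
      rw [← SetLike.mem_coe, ← T.isClosed_ker.closure_eq]
      exact QuotientAddGroup.norm_mk_eq_zero_iff_mem_closure.1 h0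
    nlinarith [hbound u]

end ContinuousLinearMap

section QuotRestrict

variable {E : Type*} [NormedAddCommGroup E] [NormedSpace ℝ E]

@[simp]
theorem quotRestrict_apply (X Y : Submodule ℝ E) (u : X) : quotRestrict X Y u = Y.mkQ u := rfl

theorem ker_quotRestrict (X Y : Submodule ℝ E) :
    (quotRestrict X Y).ker = (X ⊓ Y).comap X.subtype := by
  ext u
  simp

theorem preimage_mkQ_range_quotRestrict (X Y : Submodule ℝ E) :
    Y.mkQ ⁻¹' Set.range (quotRestrict X Y) = (X ⊔ Y : Submodule ℝ E) := by
  have hrange : Set.range (quotRestrict X Y) = X.map Y.mkQ := by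
    ext z
    simp
  rw [hrange, ← Submodule.comap_coe, Submodule.comap_map_mkQ, sup_comm]

theorem isClosed_range_quotRestrict_iff (X Y : Submodule ℝ E) :
    IsClosed (Set.range (quotRestrict X Y)) ↔ IsClosed ((X ⊔ Y : Submodule ℝ E) : Set E) := by
  rw [← preimage_mkQ_range_quotRestrict, Y.isOpenQuotientMap_mkQ.isQuotientMap.isClosed_preimage]

end QuotRestrict

theorem stmt3 {E : Type*} [NormedAddCommGroup E] [NormedSpace ℝ E] [CompleteSpace E]
    (X Y : Submodule ℝ E) (hX : IsClosed (X : Set E)) (hY : IsClosed (Y : Set E)) :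
    ¬ IsClosed ((X ⊔ Y : Submodule ℝ E) : Set E) ↔
      HasKatoPropFor (quotRestrict X Y) ((X ⊓ Y).comap X.subtype) := by
  have : CompleteSpace X := hX.completeSpace_coe
  have : IsClosed (Y : Set E) := hY
  rw [← ker_quotRestrict, ← isClosed_range_quotRestrict_iff]
  exact (quotRestrict X Y).not_isClosed_range_iff_hasKatoPropFor
end

section
/- Let E and F be Banach spaces, T : E → F a bounded linear operator, M ⊆ E a closed subspace, and {(z_n, f_n)} ⊆ E × M^⊥ a biorthogonal system (f_n(z_m) = δ_{nm}, each f_n vanishing on M). Assume there is α > 1 such that for all n: ‖Q_M z_n‖ ≤ αⁿ ‖f_n‖⁻¹ and ‖T z_n‖ ≤ α^{-2n} ‖Q_M z_n‖. Then T has the Kato property for M. -/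
open Submodule Topology TopologicalSpace

/-
Given a closed subspace `W ⊇ M` of finite codimension `d` and any `N`, the `d + 1` vectors
`z_N, …, z_{N+d}` are dependent modulo `W`, so some nontrivial combination `u = ∑ cᵢ zᵢ` lies
in `W`. Biorthogonality reads the coefficients back as `cᵢ = fᵢ u`, so `u ∉ M`, and since `fᵢ`
vanishes on `M`, `|cᵢ| ≤ ‖fᵢ‖ ‖Q_M u‖`. The two growth conditions then make each term of
`T u = ∑ cᵢ T zᵢ` at most `α⁻ⁱ ‖Q_M u‖`, so `‖T u‖ ≤ (d + 1) α⁻ᴺ ‖Q_M u‖`, which is below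
`ε ‖Q_M u‖` for large `N`.
-/

open Function

theorem ContinuousLinearMap.norm_apply_le_mul_norm_mkQ {𝕜 E G : Type*}
    [NontriviallyNormedField 𝕜] [SeminormedAddCommGroup E] [NormedSpace 𝕜 E]
    [SeminormedAddCommGroup G] [NormedSpace 𝕜 G]
    (M : Submodule 𝕜 E) (g : E →L[𝕜] G) (hg : ∀ x ∈ M, g x = 0) (u : E) :
    ‖g u‖ ≤ ‖g‖ * ‖M.mkQ u‖ := by
  rcases (norm_nonneg g).eq_or_lt' with h | h
  · simpa [h] using g.le_opNorm u
  rw [← div_le_iff₀' h]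
  refine QuotientAddGroup.le_norm_iff.mpr fun m hm => ?_
  have hgm : g m = g u := by
    rw [← sub_eq_zero, ← map_sub]
    exact hg _ ((Submodule.Quotient.eq M).mp hm)
  rw [div_le_iff₀' h, ← hgm]
  exact g.le_opNorm m

theorem exists_ne_zero_sum_smul_mem_of_finrank_quotient_lt {K V ι : Type*} [Field K]
    [AddCommGroup V] [Module K V] [Fintype ι] (W : Submodule K V)
    [FiniteDimensional K (V ⧸ W)] (v : ι → V) (h : Module.finrank K (V ⧸ W) < Fintype.card ι) :
    ∃ c : ι → K, c ≠ 0 ∧ ∑ i, c i • v i ∈ W := by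
  obtain ⟨c, hsum, i, hi⟩ := Fintype.not_linearIndependent_iff.mp
    (mt LinearIndependent.fintype_card_le_finrank h.not_ge : ¬ LinearIndependent K (W.mkQ ∘ v))
  refine ⟨c, fun hc => hi (congrFun hc i), ?_⟩
  rw [← Submodule.Quotient.mk_eq_zero, ← Submodule.mkQ_apply, map_sum]
  simpa using hsum

theorem apply_sum_smul_of_biorthogonal {R E Φ κ ι : Type*} [Semiring R] [AddCommMonoid E]
    [Module R E] [FunLike Φ E R] [LinearMapClass Φ R E R] [DecidableEq κ] [Fintype ι]
    {z : κ → E} {f : κ → Φ} (hbi : ∀ n m, f n (z m) = if n = m then 1 else 0)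
    {e : ι → κ} (he : Injective e) (c : ι → R) (j : ι) :
    f (e j) (∑ i, c i • z (e i)) = c j := by
  classical
  simp [hbi, he.eq_iff]

section GrowthConditions

variable {E F : Type*} [NormedAddCommGroup E] [NormedSpace ℝ E]
  [NormedAddCommGroup F] [NormedSpace ℝ F]
  {T : E →L[ℝ] F} {M : Submodule ℝ E} {z : ℕ → E} {f : ℕ → E →L[ℝ] ℝ} {α : ℝ}

theorem norm_apply_smul_map_le (hfM : ∀ n, ∀ x ∈ M, f n x = 0) (hα : 0 < α)
    (h1 : ∀ n, ‖M.mkQ (z n)‖ ≤ α ^ n * ‖f n‖⁻¹)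
    (h2 : ∀ n, ‖T (z n)‖ ≤ (α ^ (2 * n))⁻¹ * ‖M.mkQ (z n)‖) (n : ℕ) (u : E) :
    ‖f n u • T (z n)‖ ≤ α⁻¹ ^ n * ‖M.mkQ u‖ := by
  have hTz : ‖T (z n)‖ ≤ α⁻¹ ^ n * ‖f n‖⁻¹ :=
    calc ‖T (z n)‖ ≤ (α ^ (2 * n))⁻¹ * (α ^ n * ‖f n‖⁻¹) := (h2 n).trans (by gcongr; exact h1 n)
      _ = α⁻¹ ^ n * ‖f n‖⁻¹ := by
        rw [two_mul, pow_add, inv_pow]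
        field_simp
  calc ‖f n u • T (z n)‖ = ‖f n u‖ * ‖T (z n)‖ := norm_smul _ _
    _ ≤ (‖f n‖ * ‖M.mkQ u‖) * (α⁻¹ ^ n * ‖f n‖⁻¹) := by
      gcongr
      exact (f n).norm_apply_le_mul_norm_mkQ M (hfM n) u
    _ = α⁻¹ ^ n * (‖f n‖ * ‖f n‖⁻¹) * ‖M.mkQ u‖ := by ring
    _ ≤ α⁻¹ ^ n * 1 * ‖M.mkQ u‖ := by gcongr; exact mul_inv_le_one
    _ = α⁻¹ ^ n * ‖M.mkQ u‖ := by rw [mul_one]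

theorem norm_map_sum_smul_le {ι : Type*} [Fintype ι] (hfM : ∀ n, ∀ x ∈ M, f n x = 0)
    (hbi : ∀ n m, f n (z m) = if n = m then 1 else 0) (hα : 1 ≤ α)
    (h1 : ∀ n, ‖M.mkQ (z n)‖ ≤ α ^ n * ‖f n‖⁻¹)
    (h2 : ∀ n, ‖T (z n)‖ ≤ (α ^ (2 * n))⁻¹ * ‖M.mkQ (z n)‖)
    {e : ι → ℕ} (he : Injective e) {N : ℕ} (hN : ∀ i, N ≤ e i) (c : ι → ℝ) :
    ‖T (∑ i, c i • z (e i))‖ ≤ Fintype.card ι * α⁻¹ ^ N * ‖M.mkQ (∑ i, c i • z (e i))‖ := by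
  set u := ∑ i, c i • z (e i)
  have hTu : T u = ∑ i, f (e i) u • T (z (e i)) := by
    simp only [u, map_sum, map_smul, apply_sum_smul_of_biorthogonal hbi he]
  calc ‖T u‖ ≤ ∑ i, ‖f (e i) u • T (z (e i))‖ := hTu ▸ norm_sum_le _ _
    _ ≤ ∑ _i : ι, α⁻¹ ^ N * ‖M.mkQ u‖ := by
      gcongr with i
      refine (norm_apply_smul_map_le hfM (by linarith) h1 h2 (e i) u).trans ?_
      have hpow : α⁻¹ ^ e i ≤ α⁻¹ ^ N :=
        pow_le_pow_of_le_one (by positivity) (inv_le_one_of_one_le₀ hα) (hN i)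
      gcongr
    _ = Fintype.card ι * α⁻¹ ^ N * ‖M.mkQ u‖ := by
      rw [Finset.sum_const, Finset.card_univ, nsmul_eq_mul, mul_assoc]

end GrowthConditions

theorem stmt5_general {E F : Type*} [NormedAddCommGroup E] [NormedSpace ℝ E]
    [NormedAddCommGroup F] [NormedSpace ℝ F]
    (T : E →L[ℝ] F) (M : Submodule ℝ E)
    (z : ℕ → E) (f : ℕ → E →L[ℝ] ℝ)
    (hfM : ∀ n, ∀ x ∈ M, f n x = 0)
    (hbi : ∀ n m, f n (z m) = if n = m then 1 else 0)
    (α : ℝ) (hα : 1 < α)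
    (h1 : ∀ n, ‖M.mkQ (z n)‖ ≤ α ^ n * ‖f n‖⁻¹)
    (h2 : ∀ n, ‖T (z n)‖ ≤ (α ^ (2 * n))⁻¹ * ‖M.mkQ (z n)‖) :
    HasKatoPropFor T M := by
  intro W _ _ _ ε hε
  set d := Module.finrank ℝ (E ⧸ W)
  obtain ⟨N, hN⟩ := exists_pow_lt_of_lt_one (show 0 < ε / (d + 1) by positivity)
    (inv_lt_one_of_one_lt₀ hα)
  have he : Injective fun i : Fin (d + 1) => N + (i : ℕ) :=
    fun i j hij => Fin.ext (Nat.add_left_cancel hij)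
  obtain ⟨c, hc, huW⟩ := exists_ne_zero_sum_smul_mem_of_finrank_quotient_lt W
    (fun i : Fin (d + 1) => z (N + i)) (by simp [d])
  obtain ⟨j, hj⟩ := Function.ne_iff.mp hc
  refine ⟨_, huW, fun huM => hj ?_, ?_⟩
  · rw [← apply_sum_smul_of_biorthogonal hbi he c j]
    exact hfM _ _ huM
  calc _ ≤ (d + 1 : ℕ) * α⁻¹ ^ N * ‖M.mkQ (∑ i, c i • z (N + i))‖ := by
        simpa using norm_map_sum_smul_le hfM hbi hα.le h1 h2 he (fun i => Nat.le_add_right N i) c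
    _ ≤ ε * ‖M.mkQ (∑ i, c i • z (N + i))‖ := by
        gcongr
        push_cast
        exact ((lt_div_iff₀' (by positivity)).mp hN).le

theorem stmt5 {E F : Type*} [NormedAddCommGroup E] [NormedSpace ℝ E] [CompleteSpace E]
    [NormedAddCommGroup F] [NormedSpace ℝ F] [CompleteSpace F]
    (T : E →L[ℝ] F) (M : Submodule ℝ E) (hM : IsClosed (M : Set E))
    (z : ℕ → E) (f : ℕ → E →L[ℝ] ℝ)
    (hfM : ∀ n, ∀ x ∈ M, f n x = 0)
    (hbi : ∀ n m, f n (z m) = if n = m then 1 else 0)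
    (α : ℝ) (hα : 1 < α)
    (h1 : ∀ n, ‖M.mkQ (z n)‖ ≤ α ^ n * ‖f n‖⁻¹)
    (h2 : ∀ n, ‖T (z n)‖ ≤ (α ^ (2 * n))⁻¹ * ‖M.mkQ (z n)‖) :
    HasKatoPropFor T M :=
  stmt5_general T M z f hfM hbi α hα h1 h2
end

section
/- Let T : E → F be a dense-range bounded linear operator between Banach spaces and suppose there exists a closed infinite-codimensional subspace E₁ ⊆ E with T(E₁) dense in F. If there is a closed finite-codimensional subspace Z ⊆ E on which T restricts to an isomorphic embedding, then a contradiction arises; hence no such Z exists, i.e., T has the Kato property. -/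
open Submodule Topology TopologicalSpace

/-!
Were `T` bounded below on a closed finite-codimensional `Z`, its kernel would meet `Z` trivially
and hence be finite-dimensional, and `T` would map closed subspaces to closed subspaces. Then
`T(E₁)` is closed and dense, so `T(E₁) = F`, i.e. `E = E₁ + ker T`, which forces `E₁` to have
finite codimension.
-/

namespace ContinuousLinearMap

variable {𝕜 E F : Type*} [NontriviallyNormedField 𝕜]
  [NormedAddCommGroup E] [NormedSpace 𝕜 E] [NormedAddCommGroup F] [NormedSpace 𝕜 F]

theorem disjoint_ker_of_bounded_below (T : E →L[𝕜] F) {Z : Submodule 𝕜 E} {c : ℝ} (hc : 0 < c)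
    (hT : ∀ x ∈ Z, c * ‖x‖ ≤ ‖T x‖) : Disjoint T.ker Z := by
  refine Submodule.disjoint_def.2 fun x hker hZ => norm_le_zero_iff.1 ?_
  have := hT x hZ
  rw [show T x = 0 from hker, norm_zero] at this
  exact nonpos_of_mul_nonpos_right this hc

theorem isClosed_map_of_bounded_below [CompleteSpace E] (T : E →L[𝕜] F) {K : Submodule 𝕜 E}
    (hK : IsClosed (K : Set E)) {c : ℝ} (hc : 0 < c) (hT : ∀ x ∈ K, c * ‖x‖ ≤ ‖T x‖) :
    IsClosed (K.map (T : E →ₗ[𝕜] F) : Set F) := by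
  have : CompleteSpace K := hK.completeSpace_coe
  have hanti : AntilipschitzWith (NNReal.mk c hc.le)⁻¹ (T.comp K.subtypeL) :=
    (T.comp K.subtypeL).antilipschitz_of_bound fun x => by
      rw [NNReal.coe_inv, NNReal.coe_mk, inv_mul_eq_div, le_div_iff₀ hc, mul_comm]
      exact hT x x.2
  have hrange : Set.range (T.comp K.subtypeL) = K.map (T : E →ₗ[𝕜] F) := by
    ext; simp
  exact hrange ▸ hanti.isClosed_range (T.comp K.subtypeL).uniformContinuous

theorem isClosed_map_of_bounded_below_on_cofg [CompleteSpace 𝕜] [CompleteSpace E]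
    (T : E →L[𝕜] F) {Z : Submodule 𝕜 E} (hZ : IsClosed (Z : Set E)) [Z.CoFG] {c : ℝ}
    (hc : 0 < c) (hT : ∀ x ∈ Z, c * ‖x‖ ≤ ‖T x‖) {L : Submodule 𝕜 E}
    (hL : IsClosed (L : Set E)) : IsClosed (L.map (T : E →ₗ[𝕜] F) : Set F) := by
  have : (Z.comap L.subtype).CoFG := by
    rw [← Z.ker_mkQ, ← LinearMap.ker_comp]
    exact CoFG.ker _
  have hLZ : IsClosed ((L ⊓ Z).map (T : E →ₗ[𝕜] F) : Set F) :=
    T.isClosed_map_of_bounded_below (hL.inter hZ) hc fun x hx => hT x hx.2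
  rw [← L.map_comap_subtype Z, ← Submodule.map_comp] at hLZ
  simpa [LinearMap.range_comp] using
    ((T : E →ₗ[𝕜] F) ∘ₗ L.subtype).isClosed_range_of_isClosed_map_of_finiteDimensional_quotient hLZ

end ContinuousLinearMap

theorem stmt8_general {E F : Type*} [NormedAddCommGroup E] [NormedSpace ℝ E] [CompleteSpace E]
    [NormedAddCommGroup F] [NormedSpace ℝ F]
    (T : E →L[ℝ] F)
    (E₁ : Submodule ℝ E) (hE₁ : IsClosed (E₁ : Set E))
    (hcod : ¬ FiniteDimensional ℝ (E ⧸ E₁)) (hdense : Dense (T '' (E₁ : Set E))) :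
    ∀ Z : Submodule ℝ E, IsClosed (Z : Set E) → FiniteDimensional ℝ (E ⧸ Z) →
      ¬ ∃ c : ℝ, 0 < c ∧ ∀ x ∈ Z, c * ‖x‖ ≤ ‖T x‖ := by
  rintro Z hZ hZcod ⟨c, hc, hT⟩
  have hkerFG : T.ker.FG := CoFG.fg_of_disjoint (T.disjoint_ker_of_bounded_below hc hT) hZcod
  have hclosed : IsClosed (E₁.map (T : E →ₗ[ℝ] F) : Set F) :=
    T.isClosed_map_of_bounded_below_on_cofg hZ hc hT hE₁
  have hsurj : E₁.map (T : E →ₗ[ℝ] F) = ⊤ := by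
    rw [← Submodule.coe_eq_univ, ← hclosed.closure_eq, Submodule.map_coe]
    exact hdense.closure_eq
  have hcodisj : Codisjoint T.ker E₁ := by
    rw [codisjoint_iff, sup_comm, ← Submodule.comap_map_eq, hsurj, Submodule.comap_top]
  exact hcod (hkerFG.cofg_of_codisjoint hcodisj)

theorem stmt8 {E F : Type*} [NormedAddCommGroup E] [NormedSpace ℝ E] [CompleteSpace E]
    [NormedAddCommGroup F] [NormedSpace ℝ F] [CompleteSpace F]
    (T : E →L[ℝ] F) (hd : DenseRange T)
    (E₁ : Submodule ℝ E) (hE₁ : IsClosed (E₁ : Set E))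
    (hcod : ¬ FiniteDimensional ℝ (E ⧸ E₁)) (hdense : Dense (T '' (E₁ : Set E))) :
    ∀ Z : Submodule ℝ E, IsClosed (Z : Set E) → FiniteDimensional ℝ (E ⧸ Z) →
      ¬ ∃ c : ℝ, 0 < c ∧ ∀ x ∈ Z, c * ‖x‖ ≤ ‖T x‖ :=
  stmt8_general T E₁ hE₁ hcod hdense
end

section
/- There exist bounded linear operators T₁, T₂ : ℓ² → ℓ², each having the Kato property, whose sum T₁ + T₂ is an isomorphism of ℓ² (in particular, T₁ + T₂ does not have the Kato property). Concretely, with {e_n} the canonical basis, T₁ e_n = e_n for odd n and 3⁻ⁿ e_n for even n, and T₂ e_n = 3⁻ⁿ e_n for odd n and e_n for even n; then T₁ + T₂ = I + T where T e_n = 3⁻ⁿ e_n satisfies ‖T‖ ≤ 1/2, hence T₁ + T₂ is invertible. -/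
open Submodule Topology TopologicalSpace

/-!
A diagonal operator `f ↦ (dᵢ • fᵢ)ᵢ` on `ℓ^p` with multiplier `d ∈ ℓ^∞` has the Kato property
as soon as, for every `ε > 0`, `‖dᵢ‖ ≤ ε` for infinitely many `i`: the sequences supported on
those indices form an infinite-dimensional subspace on which the operator has norm at most `ε`,
and such a subspace meets every finite-codimensional subspace nontrivially. `T₁` and `T₂` are of
this kind, since `3⁻ⁿ` is small along the even, respectively the odd, indices. Their sum is the
diagonal operator with multiplier `1 + 3⁻ⁿ ≥ 1`, a unit of `ℓ^∞`, so it is invertible; and an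
operator with a left inverse on a nonzero space is bounded below, hence not Kato.
-/

noncomputable section

open scoped ENNReal lp
open Filter

theorem Submodule.exists_mem_inf_ne_zero {K M : Type*} [DivisionRing K] [AddCommGroup M]
    [Module K M] {V W : Submodule K M} (hV : ¬ FiniteDimensional K V)
    [FiniteDimensional K (M ⧸ W)] : ∃ v ∈ V, v ∈ W ∧ v ≠ 0 := by
  have hker : LinearMap.ker (W.mkQ ∘ₗ V.subtype) ≠ ⊥ := fun h =>
    hV (.of_injective _ (LinearMap.ker_eq_bot.mp h))
  obtain ⟨v, hv, hv0⟩ := (Submodule.ne_bot_iff _).mp hker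
  exact ⟨v, v.2, (Submodule.Quotient.mk_eq_zero W).mp hv, by simpa using hv0⟩

theorem hasKatoProp_of_forall_exists_not_finiteDimensional {E F : Type*}
    [SeminormedAddCommGroup E] [NormedSpace ℝ E] [SeminormedAddCommGroup F] [NormedSpace ℝ F]
    {T : E →L[ℝ] F}
    (h : ∀ ε > 0, ∃ V : Submodule ℝ E, ¬ FiniteDimensional ℝ V ∧ ∀ v ∈ V, ‖T v‖ ≤ ε * ‖v‖) :
    HasKatoProp T := by
  intro W _ _ ε hε
  obtain ⟨V, hV, hTV⟩ := h ε hε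
  obtain ⟨v, hvV, hvW, hv0⟩ := Submodule.exists_mem_inf_ne_zero (W := W) hV
  exact ⟨v, hvW, hv0, hTV v hvV⟩

theorem not_hasKatoProp_of_leftInverse {E F : Type*} [NormedAddCommGroup E] [NormedSpace ℝ E]
    [Nontrivial E] [SeminormedAddCommGroup F] [NormedSpace ℝ F] {T : E →L[ℝ] F}
    {S : F →L[ℝ] E} (hST : S.comp T = ContinuousLinearMap.id ℝ E) : ¬ HasKatoProp T := by
  intro hT
  obtain ⟨u, -, hu0, hTu⟩ := hT ⊤ (by simp) inferInstance (‖S‖ + 1)⁻¹ (by positivity)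
  have hu : 0 < ‖u‖ := norm_pos_iff.mpr hu0
  have hS : ‖S‖ * (‖S‖ + 1)⁻¹ < 1 := by
    rw [← div_eq_mul_inv, div_lt_one (by positivity)]
    linarith
  have : ‖u‖ ≤ ‖S‖ * (‖S‖ + 1)⁻¹ * ‖u‖ := calc
    ‖u‖ = ‖S (T u)‖ := by rw [← ContinuousLinearMap.comp_apply, hST]; rfl
    _ ≤ ‖S‖ * ‖T u‖ := S.le_opNorm _
    _ ≤ ‖S‖ * ((‖S‖ + 1)⁻¹ * ‖u‖) := by gcongr
    _ = _ := by ring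
  exact (this.trans_lt (mul_lt_of_lt_one_left hu hS)).false

namespace lp

section Multiplier

variable {α 𝕜 : Type*} [NormedField 𝕜] {E : α → Type*} [∀ i, NormedAddCommGroup (E i)]
  [∀ i, NormedSpace 𝕜 (E i)] {p : ℝ≥0∞}

instance [Nonempty α] [∀ i, Nontrivial (E i)] : Nontrivial (lp E p) := by
  classical
  inhabit α
  obtain ⟨a, ha⟩ := exists_ne (0 : E default)
  exact ⟨lp.single p default a, 0, fun h => ha (by simpa using congrArg (· default) h)⟩

def piecewise (s : Set α) [DecidablePred (· ∈ s)] (f g : lp E p) : lp E p :=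
  ⟨s.piecewise f g, ((lp.memℓp f).norm.add (lp.memℓp g).norm).mono fun i => by
    by_cases hi : i ∈ s <;> simp [hi]⟩

@[simp] theorem piecewise_apply (s : Set α) [DecidablePred (· ∈ s)] (f g : lp E p) (i : α) :
    piecewise s f g i = if i ∈ s then f i else g i := rfl

theorem isUnit_of_forall_le_norm {d : ℓ^∞(α, 𝕜)} {c : ℝ} (hc : 0 < c)
    (hd : ∀ i, c ≤ ‖d i‖) : IsUnit d := by
  have hinv : Memℓp (fun i => (d i)⁻¹) ∞ := memℓp_infty ⟨c⁻¹, by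
    rintro _ ⟨i, rfl⟩
    simpa using inv_anti₀ hc (hd i)⟩
  refine .of_mul_eq_one ⟨_, hinv⟩ (lp.ext <| funext fun i => ?_)
  have : d i ≠ 0 := norm_pos_iff.mp (hc.trans_le (hd i))
  simp [lp.infty_coeFn_mul, lp.infty_coeFn_one, this]

theorem norm_smul_apply_le (d : ℓ^∞(α, 𝕜)) (f : lp E p) (i : α) :
    ‖d i • f i‖ ≤ ‖d‖ * ‖f i‖ := by
  rw [norm_smul]
  gcongr
  exact lp.norm_apply_le_norm ENNReal.top_ne_zero d i

theorem memℓp_infty_smul (d : ℓ^∞(α, 𝕜)) (f : lp E p) : Memℓp (fun i => d i • f i) p :=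
  ((lp.memℓp f).norm.const_mul ‖d‖).mono (norm_smul_apply_le d f)

variable [Fact (1 ≤ p)]

variable (E p) in
def diagMulCLM (d : ℓ^∞(α, 𝕜)) : lp E p →L[𝕜] lp E p :=
  LinearMap.mkContinuous
    { toFun := fun f => ⟨fun i => d i • f i, memℓp_infty_smul d f⟩
      map_add' := fun f g => lp.ext <| funext fun i => smul_add (d i) (f i) (g i)
      map_smul' := fun c f => lp.ext <| funext fun i => smul_comm (d i) c (f i) }
    ‖d‖
    fun f => by
      have hp : p ≠ 0 := (zero_lt_one.trans_le Fact.out).ne'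
      calc _ ≤ ‖‖d‖ • lp.toNorm f‖ := lp.norm_mono hp fun i => by
            simpa [abs_of_nonneg (norm_nonneg d)] using norm_smul_apply_le d f i
        _ = ‖d‖ * ‖f‖ := by
            rw [lp.norm_const_smul hp, lp.norm_toNorm, Real.norm_of_nonneg (norm_nonneg d)]

@[simp] theorem diagMulCLM_apply (d : ℓ^∞(α, 𝕜)) (f : lp E p) (i : α) :
    diagMulCLM E p d f i = d i • f i := rfl

variable (E p) in
def diagMul : ℓ^∞(α, 𝕜) →+* (lp E p →L[𝕜] lp E p) where
  toFun := diagMulCLM E p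
  map_one' := by ext f i; simp
  map_mul' d d' := by ext f i; simp [mul_smul]
  map_zero' := by ext f i; simp
  map_add' d d' := by ext f i; simp [add_smul]

@[simp] theorem diagMul_apply (d : ℓ^∞(α, 𝕜)) (f : lp E p) (i : α) :
    diagMul E p d f i = d i • f i := rfl

theorem diagMul_single [DecidableEq α] (d : ℓ^∞(α, 𝕜)) (i : α) (a : E i) :
    diagMul E p d (lp.single p i a) = d i • lp.single p i a := by
  ext j
  by_cases h : j = i
  · subst h; simp
  · simp [Pi.single_eq_of_ne h]

end Multiplier

section Supported

variable {α : Type*} (𝕜 : Type*) [NormedField 𝕜] (E : α → Type*) [∀ i, NormedAddCommGroup (E i)]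
  [∀ i, NormedSpace 𝕜 (E i)] (p : ℝ≥0∞)

def supported (s : Set α) : Submodule 𝕜 (lp E p) :=
  ⨅ i ∈ sᶜ, LinearMap.ker (lp.evalₗ E p i)

variable {𝕜 E p}

theorem mem_supported {s : Set α} {f : lp E p} :
    f ∈ supported 𝕜 E p s ↔ ∀ i ∉ s, f i = 0 := by
  simp [supported, Submodule.mem_iInf]

theorem not_finiteDimensional_supported {s : Set α} (hs : s.Infinite) :
    ¬ FiniteDimensional 𝕜 (supported 𝕜 (fun _ : α => 𝕜) p s) := by
  classical
  intro
  let v : s → supported 𝕜 (fun _ : α => 𝕜) p s := fun i =>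
    ⟨lp.single p i 1, mem_supported.mpr fun j hj => lp.single_apply_ne p _ _ fun h => hj (h ▸ i.2)⟩
  have hv : LinearIndependent 𝕜 v := by
    refine .of_comp (LinearMap.pi (lp.evalₗ _ p) ∘ₗ Submodule.subtype _) ?_
    convert (Pi.linearIndependent_single_one α 𝕜).comp _ Subtype.val_injective using 1
    · rfl -- `Pi.module` against `Pi.Function.module` on `α → 𝕜`
    ext i j
    simp
  have := hs.to_subtype
  have := hv.finite
  exact not_finite s

end Supported

theorem hasKatoProp_diagMul {α : Type*} {p : ℝ≥0∞} [Fact (1 ≤ p)] {d : ℓ^∞(α, ℝ)}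
    (hd : ∀ ε > 0, ∃ᶠ i in cofinite, ‖d i‖ ≤ ε) :
    HasKatoProp (diagMul (fun _ : α => ℝ) p d) := by
  have hp : p ≠ 0 := (zero_lt_one.trans_le Fact.out).ne'
  refine hasKatoProp_of_forall_exists_not_finiteDimensional fun ε hε =>
    ⟨supported ℝ _ p {i | ‖d i‖ ≤ ε},
      not_finiteDimensional_supported (frequently_cofinite_iff_infinite.mp (hd ε hε)),
      fun v hv => ?_⟩
  calc _ ≤ ‖ε • v‖ := lp.norm_mono hp fun i => by
        by_cases hi : ‖d i‖ ≤ ε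
        · simpa [norm_smul, abs_of_pos hε] using mul_le_mul_of_nonneg_right hi (norm_nonneg (v i))
        · simp [mem_supported.mp hv i hi]
    _ = ε * ‖v‖ := by rw [norm_smul, Real.norm_of_nonneg hε.le]

end lp

def invThreePow : ℓ^∞(ℕ, ℝ) :=
  ⟨fun n => ((3 : ℝ) ^ n)⁻¹, memℓp_infty ⟨1, by
    rintro _ ⟨n, rfl⟩
    simpa using inv_le_one_of_one_le₀ (one_le_pow₀ (by norm_num : (1 : ℝ) ≤ 3))⟩⟩

@[simp] theorem invThreePow_apply (n : ℕ) : invThreePow n = ((3 : ℝ) ^ n)⁻¹ := rfl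

theorem frequently_and_inv_three_pow_le {P : ℕ → Prop} (hP : ∃ᶠ n in atTop, P n) {ε : ℝ} (hε : 0 < ε) :
    ∃ᶠ n in cofinite, P n ∧ ((3 : ℝ) ^ n)⁻¹ ≤ ε := by
  have ht : Tendsto (fun n : ℕ => ((3 : ℝ) ^ n)⁻¹) atTop (𝓝 0) :=
    tendsto_inv_atTop_zero.comp (tendsto_pow_atTop_atTop_of_one_lt (by norm_num))
  rw [Nat.cofinite_eq_atTop]
  exact hP.and_eventually (ht.eventually (ge_mem_nhds hε))

theorem stmt18 :
    ∃ T₁ T₂ : lp (fun _ : ℕ => ℝ) 2 →L[ℝ] lp (fun _ : ℕ => ℝ) 2,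
      (∀ n : ℕ, T₁ (lp.single 2 n (1 : ℝ)) =
        if Odd n then lp.single 2 n (1 : ℝ) else ((3 : ℝ) ^ n)⁻¹ • lp.single 2 n (1 : ℝ)) ∧
      (∀ n : ℕ, T₂ (lp.single 2 n (1 : ℝ)) =
        if Odd n then ((3 : ℝ) ^ n)⁻¹ • lp.single 2 n (1 : ℝ) else lp.single 2 n (1 : ℝ)) ∧
      HasKatoProp T₁ ∧ HasKatoProp T₂ ∧ ¬ HasKatoProp (T₁ + T₂) ∧
      ∃ S : lp (fun _ : ℕ => ℝ) 2 →L[ℝ] lp (fun _ : ℕ => ℝ) 2,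
        (T₁ + T₂).comp S = ContinuousLinearMap.id ℝ _ ∧
        S.comp (T₁ + T₂) = ContinuousLinearMap.id ℝ _ := by
  set d₁ := lp.piecewise {n | Odd n} 1 invThreePow
  set d₂ := lp.piecewise {n | Odd n} invThreePow 1
  have hsum : ∀ n, (d₁ + d₂) n = 1 + ((3 : ℝ) ^ n)⁻¹ := fun n => by
    by_cases hn : Odd n <;> simp [d₁, d₂, hn, lp.infty_coeFn_one, add_comm]
  have hbdd : ∀ n, 1 ≤ ‖(d₁ + d₂) n‖ := fun n => by
    rw [hsum, Real.norm_of_nonneg (by positivity)]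
    exact le_add_of_nonneg_right (by positivity)
  obtain ⟨S, hS⟩ := (lp.isUnit_of_forall_le_norm one_pos hbdd).map (lp.diagMul (fun _ : ℕ => ℝ) 2)
  rw [map_add] at hS
  refine ⟨lp.diagMul _ 2 d₁, lp.diagMul _ 2 d₂, fun n => ?_, fun n => ?_,
    lp.hasKatoProp_diagMul fun ε hε => ?_, lp.hasKatoProp_diagMul fun ε hε => ?_,
    not_hasKatoProp_of_leftInverse (S := ↑S⁻¹) ?_, ↑S⁻¹, ?_, ?_⟩
  · by_cases hn : Odd n <;> simp [lp.diagMul_single, d₁, hn, lp.infty_coeFn_one]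
  · by_cases hn : Odd n <;> simp [lp.diagMul_single, d₂, hn, lp.infty_coeFn_one]
  · exact (frequently_and_inv_three_pow_le Nat.frequently_even hε).mono fun n ⟨he, hn⟩ => by
      simpa [d₁, Nat.not_odd_iff_even.mpr he, abs_of_pos] using hn
  · exact (frequently_and_inv_three_pow_le Nat.frequently_odd hε).mono fun n ⟨ho, hn⟩ => by
      simpa [d₂, ho] using hn
  all_goals rw [← hS, ← ContinuousLinearMap.mul_def, ← ContinuousLinearMap.one_def]
  exacts [S.inv_mul, S.mul_inv, S.inv_mul]
end
end

section
/- Let E and F be Banach spaces, T : E → F a bounded linear operator, M ⊆ E a closed subspace, and {(z_n, f_n)} ⊆ E × M^⊥ a biorthogonal system. Assume there exists α > 1 with ‖Q_M z_n‖ ≤ αⁿ ‖f_n‖⁻¹ and ‖T z_n‖ ≤ α^{-2n} ‖Q_M z_n‖ for all n. Then for every sequence {ε_n} of positive reals and every sequence {W_n} of closed finite-codimensional subspaces of E, there exists a block sequence {u_n} of {z_n} such that: (1) {Q_M u_n} is a normalized basic sequence in E/M; (2) u_n ∈ W₁ ∩ ... ∩ W_n for each n; and (3) ‖T u_n‖ ≤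 ε_n for each n. -/
open Submodule Topology TopologicalSpace

/-!
For `u` in the span of `z p, z (p+1), …`, biorthogonality recovers the coefficients as `f i u`,
and `|f i u| ≤ ‖f i‖ ‖Q_M u‖`; with the two growth conditions this gives
`‖T u‖ ≤ ∑_{i ≥ p} α⁻ⁱ ‖Q_M u‖`, which is small once `p` is large. The blocks are chosen one at
a time: more than `d` consecutive `z i` span a vector outside `M` in the kernel of any given linear
map to a `d`-dimensional space. The map used records the classes modulo `W 0, …, W n` and the
values of finitely many functionals supplied by Mazur's lemma, which make
`‖s‖ ≤ (1 + 2⁻ⁿ) ‖s + t Q_M u n‖` for `s` in the span of the earlier `Q_M u k`. Since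
`∏ (1 + 2⁻ⁿ)` converges, `(Q_M u n)` is basic.
-/

-- Mazur's lemma: norming functionals of a fine finite net of the unit sphere of `S` will do.
theorem Submodule.exists_finset_dual_norm_le_one_add_mul_norm_add
    {V : Type*} [NormedAddCommGroup V] [NormedSpace ℝ V]
    (S : Submodule ℝ V) [FiniteDimensional ℝ S] {δ : ℝ} (hδ : 0 < δ) :
    ∃ Φ : Finset (V →L[ℝ] ℝ), ∀ s ∈ S, ∀ w : V, (∀ φ ∈ Φ, φ w = 0) →
      ‖s‖ ≤ (1 + δ) * ‖s + w‖ := by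
  classical
  set η := δ / (1 + δ) with hη
  obtain ⟨t, hts, ht, hcover⟩ :=
    finite_cover_balls_of_compact (isCompact_sphere (0 : S) 1) (by positivity : 0 < η)
  choose g hg_norm hg_apply using fun c : S => exists_dual_vector'' ℝ (c : V)
  refine ⟨ht.toFinset.image g, fun s hs w hw => ?_⟩
  suffices (1 - η) * ‖s‖ ≤ ‖s + w‖ by
    have : (1 + δ) * (1 - η) = 1 := by rw [hη]; field_simp; ring
    nlinarith [norm_nonneg s]
  rcases eq_or_ne s 0 with rfl | hs0
  · simp
  have hs_pos : 0 < ‖s‖ := norm_pos_iff.2 hs0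
  have hx : (‖s‖⁻¹ • ⟨s, hs⟩ : S) ∈ Metric.sphere 0 1 := by
    simp [norm_smul, hs_pos.ne']
  obtain ⟨c, hct, hxc⟩ := Set.mem_iUnion₂.1 (hcover hx)
  have hc : ‖(c : V)‖ = 1 := by simpa using hts hct
  have hgw : g c w = 0 := hw _ (Finset.mem_image_of_mem g (ht.mem_toFinset.2 hct))
  have hcs : ‖‖s‖ • (c : V) - s‖ ≤ η * ‖s‖ := by
    have : ‖s‖ • (c : V) - s = ‖s‖ • ((c : V) - ‖s‖⁻¹ • s) := by
      rw [smul_sub, smul_inv_smul₀ hs_pos.ne']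
    rw [this, norm_smul, norm_norm, mul_comm]
    have := Metric.mem_ball.1 hxc
    rw [dist_comm, dist_eq_norm] at this
    exact mul_le_mul_of_nonneg_right (by simpa using this.le) (norm_nonneg s)
  calc (1 - η) * ‖s‖ = g c (‖s‖ • (c : V) + w) - η * ‖s‖ := by
        simp only [map_add, map_smul, hg_apply, hc, hgw, RCLike.ofReal_real_eq_id, id,
          smul_eq_mul]
        ring
    _ ≤ ‖‖s‖ • (c : V) + w‖ - η * ‖s‖ := by
        gcongr
        exact (Real.le_norm_self _).trans
          (((g c).le_of_opNorm_le (hg_norm c) _).trans_eq (one_mul _))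
    _ ≤ ‖s + w‖ := by
        have := norm_add_le (s + w) (‖s‖ • (c : V) - s)
        rw [show s + w + (‖s‖ • (c : V) - s) = ‖s‖ • (c : V) + w by abel] at this
        linarith

theorem abs_apply_le_norm_mul_norm_mkQ {E : Type*} [SeminormedAddCommGroup E] [NormedSpace ℝ E]
    {M : Submodule ℝ E} {g : E →L[ℝ] ℝ} (hg : ∀ x ∈ M, g x = 0) (u : E) :
    |g u| ≤ ‖g‖ * ‖M.mkQ u‖ := by
  rcases (norm_nonneg g).eq_or_lt with h | h
  · simpa [← h] using g.le_opNorm u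
  rw [← div_le_iff₀' h]
  refine QuotientAddGroup.le_norm_iff.2 fun m hm => ?_
  have : g m = g u := by
    rw [← sub_eq_zero, ← map_sub]
    exact hg _ ((Submodule.Quotient.eq M).1 hm)
  rw [div_le_iff₀' h, ← this]
  exact g.le_opNorm m

theorem eq_sum_smul_of_mem_span_image {R E ι : Type*} [CommRing R] [AddCommGroup E] [Module R E]
    [DecidableEq ι] {z : ι → E} {f : ι → E →ₗ[R] R}
    (hbi : ∀ i j, f i (z j) = if i = j then 1 else 0) {s : Finset ι} {u : E}
    (hu : u ∈ span R (z '' s)) : u = ∑ i ∈ s, f i u • z i := by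
  have := LinearMap.eqOn_span' (f := LinearMap.id)
    (g := ∑ i ∈ s, (f i).smulRight (z i)) (s := z '' s) ?_ hu
  · simpa using this
  rintro _ ⟨j, hj, rfl⟩
  simp [hbi, Finset.mem_coe.1 hj]

theorem isBlockSeq_of_eq_sum {E : Type*} [AddCommMonoid E] [Module ℝ E] {z u : ℕ → E}
    {P : ℕ → ℕ} (hP : StrictMono P) (c : ℕ → ℕ → ℝ)
    (hu : ∀ n, u n = ∑ i ∈ Finset.Ico (P n) (P (n + 1)), c n i • z i) : IsBlockSeq z u := by
  -- `Nat.findGreatest (P · ≤ i) i` is the index of the block containing `i`.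
  have hblock : ∀ n, ∀ i ∈ Finset.Ico (P n) (P (n + 1)), Nat.findGreatest (P · ≤ i) i = n := by
    intro n i hi
    rw [Finset.mem_Ico] at hi
    refine Nat.findGreatest_eq_iff.2 ⟨hP.le_apply.trans hi.1, fun _ => hi.1, fun k hk _ hki => ?_⟩
    exact (hi.2.trans_le (hP.monotone hk)).not_ge hki
  refine ⟨P, fun i => c (Nat.findGreatest (P · ≤ i) i) i, hP, fun n => ?_⟩
  rw [hu n]
  exact Finset.sum_congr rfl fun i hi => by simp only [hblock n i hi]

theorem isNormalizedBasicSeq_of_norm_le {V : Type*} [SeminormedAddCommGroup V] [NormedSpace ℝ V]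
    {v : ℕ → V} {δ : ℕ → ℝ} (hv : ∀ n, ‖v n‖ = 1) (hδ0 : ∀ n, 0 ≤ δ n) (hδ : Summable δ)
    (hstep : ∀ (a : ℕ → ℝ) n, ‖∑ i ∈ Finset.range n, a i • v i‖ ≤
      (1 + δ n) * ‖∑ i ∈ Finset.range (n + 1), a i • v i‖) :
    IsNormalizedBasicSeq v := by
  refine ⟨hv, Real.exp (∑' n, δ n), Real.exp_pos _, fun a m n hmn => ?_⟩
  set S := fun n => ‖∑ i ∈ Finset.range n, a i • v i‖
  have key : ∀ n, m ≤ n → S m ≤ Real.exp (∑ k ∈ Finset.Ico m n, δ k) * S n := by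
    intro n hmn
    induction n, hmn using Nat.le_induction with
    | base => simp
    | succ n hmn ih =>
      calc S m ≤ Real.exp (∑ k ∈ Finset.Ico m n, δ k) * ((1 + δ n) * S (n + 1)) :=
            ih.trans (by gcongr; exact hstep a n)
        _ ≤ Real.exp (∑ k ∈ Finset.Ico m n, δ k) * (Real.exp (δ n) * S (n + 1)) := by
            gcongr
            linarith [Real.add_one_le_exp (δ n)]
        _ = Real.exp (∑ k ∈ Finset.Ico m (n + 1), δ k) * S (n + 1) := by
            rw [Finset.sum_Ico_succ_top hmn, Real.exp_add, mul_assoc]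
  refine (key n hmn).trans (mul_le_mul_of_nonneg_right ?_ (norm_nonneg _))
  exact Real.exp_le_exp.2 (hδ.sum_le_tsum _ fun k _ => hδ0 k)

theorem exists_blocks_of_forall_finset_exists {V X : Type*} [DecidableEq V] (g : X → V)
    (R : ℕ → ℕ → Finset V → ℕ → X → Prop) (h : ∀ n N A, ∃ q x, R n N A q x) :
    ∃ (P : ℕ → ℕ) (x : ℕ → X),
      ∀ n, R n (P n) ((Finset.range n).image (g ∘ x)) (P (n + 1)) (x n) := by
  choose q x hx using h
  let st : ℕ → ℕ × Finset V := fun n => Nat.rec (0, ∅)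
    (fun n s => (q n s.1 s.2, insert (g (x n s.1 s.2)) s.2)) n
  let y : ℕ → X := fun n => x n (st n).1 (st n).2
  have hst : ∀ n, (st n).2 = (Finset.range n).image (g ∘ y) := by
    intro n
    induction n with
    | zero => rfl
    | succ n ih =>
      rw [Finset.range_add_one, Finset.image_insert, ← ih]
      rfl
  refine ⟨fun n => (st n).1, y, fun n => ?_⟩
  rw [← hst]
  exact hx n _ _

section Biorthogonal

variable {E F : Type*} [NormedAddCommGroup E] [NormedSpace ℝ E] [NormedAddCommGroup F]
  [NormedSpace ℝ F] {T : E →L[ℝ] F} {M : Submodule ℝ E} {z : ℕ → E} {f : ℕ → E →L[ℝ] ℝ}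
  {α : ℝ}

theorem norm_apply_le_of_mem_span_Ico (hfM : ∀ n, ∀ x ∈ M, f n x = 0)
    (hbi : ∀ n m, f n (z m) = if n = m then 1 else 0) (hα : 1 < α)
    (h1 : ∀ n, ‖M.mkQ (z n)‖ ≤ α ^ n * ‖f n‖⁻¹)
    (h2 : ∀ n, ‖T (z n)‖ ≤ (α ^ (2 * n))⁻¹ * ‖M.mkQ (z n)‖)
    {p q : ℕ} {u : E} (hu : u ∈ span ℝ (z '' Set.Ico p q)) :
    ‖T u‖ ≤ α⁻¹ ^ p / (1 - α⁻¹) * ‖M.mkQ u‖ := by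
  have hα0 : 0 < α := one_pos.trans hα
  have hterm : ∀ i, ‖f i u • T (z i)‖ ≤ α⁻¹ ^ i * ‖M.mkQ u‖ := fun i =>
    calc ‖f i u • T (z i)‖ ≤ (‖f i‖ * ‖M.mkQ u‖) * ((α ^ (2 * i))⁻¹ * (α ^ i * ‖f i‖⁻¹)) := by
          rw [norm_smul, Real.norm_eq_abs]
          gcongr
          · exact abs_apply_le_norm_mul_norm_mkQ (hfM i) u
          · exact (h2 i).trans (by gcongr; exact h1 i)
      _ = (‖f i‖ * ‖f i‖⁻¹) * (α⁻¹ ^ i * ‖M.mkQ u‖) := by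
          rw [pow_mul', sq, mul_inv, inv_pow]
          field_simp
      _ ≤ α⁻¹ ^ i * ‖M.mkQ u‖ := mul_le_of_le_one_left (by positivity) mul_inv_le_one
  have hrep := eq_sum_smul_of_mem_span_image (f := fun n => (f n : E →ₗ[ℝ] ℝ)) hbi
    (s := Finset.Ico p q) (by rwa [Finset.coe_Ico])
  have hTu : T u = ∑ i ∈ Finset.Ico p q, f i u • T (z i) := by
    conv_lhs => rw [hrep]
    simp only [map_sum, map_smul, ContinuousLinearMap.coe_coe]
  calc ‖T u‖ ≤ ∑ i ∈ Finset.Ico p q, ‖f i u • T (z i)‖ := hTu ▸ norm_sum_le _ _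
    _ ≤ ∑ i ∈ Finset.Ico p q, α⁻¹ ^ i * ‖M.mkQ u‖ := Finset.sum_le_sum fun i _ => hterm i
    _ ≤ α⁻¹ ^ p / (1 - α⁻¹) * ‖M.mkQ u‖ := by
        rw [← Finset.sum_mul]
        gcongr
        exact geom_sum_Ico_le_of_lt_one (by positivity) (inv_lt_one_of_one_lt₀ hα)

theorem exists_mem_span_Ico_notMem_of_map_eq_zero (hfM : ∀ n, ∀ x ∈ M, f n x = 0)
    (hbi : ∀ n m, f n (z m) = if n = m then 1 else 0) {G : Type*} [AddCommGroup G] [Module ℝ G]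
    [FiniteDimensional ℝ G] (Ψ : E →ₗ[ℝ] G) (p : ℕ) :
    ∃ q, p < q ∧ ∃ u ∈ span ℝ (z '' Set.Ico p q), Ψ u = 0 ∧ u ∉ M := by
  set N := Module.finrank ℝ G + 1
  set L := Fintype.linearCombination ℝ (fun j : Fin N => z (p + j))
  obtain ⟨b, hb, hb0⟩ := (Submodule.ne_bot_iff _).1
    (LinearMap.ker_ne_bot_of_finrank_lt (f := Ψ ∘ₗ L) (by simp [N]))
  obtain ⟨j, hj⟩ := Function.ne_iff.1 hb0
  have hLb : L b = ∑ k, b k • z (p + k) := Fintype.linearCombination_apply _ _ _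
  refine ⟨p + N, by omega, L b, ?_, hb, fun hM => hj ?_⟩
  · rw [hLb]
    exact sum_smul_mem _ _ fun k _ => subset_span ⟨p + k, ⟨by omega, by omega⟩, rfl⟩
  · have : f (p + j) (L b) = b j := by
      simp [hLb, hbi, Fin.val_inj]
    rw [← this, hfM _ _ hM, Pi.zero_apply]

theorem exists_mem_span_Ico_norm_mkQ_eq_one [IsClosed (M : Set E)]
    (hfM : ∀ n, ∀ x ∈ M, f n x = 0)
    (hbi : ∀ n m, f n (z m) = if n = m then 1 else 0) (hα : 1 < α)
    (h1 : ∀ n, ‖M.mkQ (z n)‖ ≤ α ^ n * ‖f n‖⁻¹)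
    (h2 : ∀ n, ‖T (z n)‖ ≤ (α ^ (2 * n))⁻¹ * ‖M.mkQ (z n)‖)
    {G : Type*} [AddCommGroup G] [Module ℝ G] [FiniteDimensional ℝ G] (Ψ : E →ₗ[ℝ] G)
    (N : ℕ) {η : ℝ} (hη : 0 < η) :
    ∃ q u, N < q ∧ u ∈ span ℝ (z '' Set.Ico N q) ∧ Ψ u = 0 ∧ ‖M.mkQ u‖ = 1 ∧ ‖T u‖ ≤ η := by
  have hr1 : α⁻¹ < 1 := inv_lt_one_of_one_lt₀ hα
  obtain ⟨k, hk⟩ := exists_pow_lt_of_lt_one (mul_pos hη (sub_pos.2 hr1)) hr1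
  set p := max N k
  obtain ⟨q, hpq, u, hu, hΨu, huM⟩ := exists_mem_span_Ico_notMem_of_map_eq_zero hfM hbi Ψ p
  have hQu : 0 < ‖M.mkQ u‖ := norm_pos_iff.2 ((Submodule.Quotient.mk_eq_zero M).not.2 huM)
  set v := ‖M.mkQ u‖⁻¹ • u
  have hv : v ∈ span ℝ (z '' Set.Ico p q) := smul_mem _ _ hu
  have hQv : ‖M.mkQ v‖ = 1 := by
    rw [map_smul, norm_smul, norm_inv, norm_norm, inv_mul_cancel₀ hQu.ne']
  refine ⟨q, v, by omega, span_mono (Set.image_mono (Set.Ico_subset_Ico_left (le_max_left N k))) hv,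
    by simp [v, hΨu], hQv, ?_⟩
  calc ‖T v‖ ≤ α⁻¹ ^ p / (1 - α⁻¹) * ‖M.mkQ v‖ :=
        norm_apply_le_of_mem_span_Ico hfM hbi hα h1 h2 hv
    _ ≤ η := by
        rw [hQv, mul_one, div_le_iff₀ (sub_pos.2 hr1)]
        exact (pow_le_pow_of_le_one (by positivity) hr1.le (le_max_right N k)).trans hk.le

theorem exists_block_step [IsClosed (M : Set E)] (hfM : ∀ n, ∀ x ∈ M, f n x = 0)
    (hbi : ∀ n m, f n (z m) = if n = m then 1 else 0) (hα : 1 < α)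
    (h1 : ∀ n, ‖M.mkQ (z n)‖ ≤ α ^ n * ‖f n‖⁻¹)
    (h2 : ∀ n, ‖T (z n)‖ ≤ (α ^ (2 * n))⁻¹ * ‖M.mkQ (z n)‖)
    {W : ℕ → Submodule ℝ E} (hWf : ∀ n, FiniteDimensional ℝ (E ⧸ W n))
    (n N : ℕ) (A : Finset (E ⧸ M)) {δ η : ℝ} (hδ : 0 < δ) (hη : 0 < η) :
    ∃ q u, N < q ∧ u ∈ span ℝ (z '' Set.Ico N q) ∧ (∀ i ≤ n, u ∈ W i) ∧ ‖M.mkQ u‖ = 1 ∧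
      ‖T u‖ ≤ η ∧ ∀ s ∈ span ℝ (A : Set (E ⧸ M)), ∀ t : ℝ, ‖s‖ ≤ (1 + δ) * ‖s + t • M.mkQ u‖ := by
  obtain ⟨Φ, hΦ⟩ := (span ℝ (A : Set (E ⧸ M))).exists_finset_dual_norm_le_one_add_mul_norm_add hδ
  have : ∀ i : Fin (n + 1), FiniteDimensional ℝ (E ⧸ W i) := fun i => hWf i
  let Ψ := (LinearMap.pi fun i : Fin (n + 1) => (W i).mkQ).prod
    (LinearMap.pi fun φ : Φ => (φ : E ⧸ M →L[ℝ] ℝ).toLinearMap ∘ₗ M.mkQ)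
  obtain ⟨q, u, hNq, hu, hΨu, hQu, hTu⟩ :=
    exists_mem_span_Ico_norm_mkQ_eq_one hfM hbi hα h1 h2 Ψ N hη
  refine ⟨q, u, hNq, hu, fun i hi => ?_, hQu, hTu, fun s hs t => hΦ s hs _ fun φ hφ => ?_⟩
  · simpa [Ψ] using congr_fun (congr_arg Prod.fst hΨu) ⟨i, by omega⟩
  · have : φ (M.mkQ u) = 0 := congr_fun (congr_arg Prod.snd hΨu) ⟨φ, hφ⟩
    rw [map_smul, this, smul_zero]

end Biorthogonal

theorem stmt19_general {E F : Type*} [NormedAddCommGroup E] [NormedSpace ℝ E]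
    [NormedAddCommGroup F] [NormedSpace ℝ F]
    (T : E →L[ℝ] F) (M : Submodule ℝ E) (hM : IsClosed (M : Set E))
    (z : ℕ → E) (f : ℕ → E →L[ℝ] ℝ)
    (hfM : ∀ n, ∀ x ∈ M, f n x = 0)
    (hbi : ∀ n m, f n (z m) = if n = m then 1 else 0)
    (α : ℝ) (hα : 1 < α)
    (h1 : ∀ n, ‖M.mkQ (z n)‖ ≤ α ^ n * ‖f n‖⁻¹)
    (h2 : ∀ n, ‖T (z n)‖ ≤ (α ^ (2 * n))⁻¹ * ‖M.mkQ (z n)‖)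
    (ε : ℕ → ℝ) (hε : ∀ n, 0 < ε n)
    (W : ℕ → Submodule ℝ E) (hWf : ∀ n, FiniteDimensional ℝ (E ⧸ W n)) :
    ∃ u : ℕ → E, IsBlockSeq z u ∧
      IsNormalizedBasicSeq (fun n => M.mkQ (u n)) ∧
      (∀ n, ∀ i ≤ n, u n ∈ W i) ∧
      (∀ n, ‖T (u n)‖ ≤ ε n) := by
  classical
  obtain ⟨P, u, hu⟩ := exists_blocks_of_forall_finset_exists M.mkQ _ fun n N A =>
    exists_block_step hfM hbi hα h1 h2 hWf n N A (pow_pos one_half_pos n) (hε n)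
  choose hP hspan hW hnorm hT hbasic using hu
  refine ⟨u, isBlockSeq_of_eq_sum (strictMono_nat_of_lt_succ hP) (fun n i => f i (u n))
    fun n => ?_, isNormalizedBasicSeq_of_norm_le hnorm (fun n => by positivity)
    summable_geometric_two fun a n => ?_, hW, hT⟩
  · exact eq_sum_smul_of_mem_span_image (f := fun i => (f i : E →ₗ[ℝ] ℝ)) hbi
      (by rw [Finset.coe_Ico]; exact hspan n)
  · rw [Finset.sum_range_succ]
    exact hbasic n _ (sum_smul_mem _ _ fun i hi => subset_span (Finset.mem_image_of_mem _ hi)) _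

theorem stmt19 {E F : Type*} [NormedAddCommGroup E] [NormedSpace ℝ E] [CompleteSpace E]
    [NormedAddCommGroup F] [NormedSpace ℝ F] [CompleteSpace F]
    (T : E →L[ℝ] F) (M : Submodule ℝ E) (hM : IsClosed (M : Set E))
    (z : ℕ → E) (f : ℕ → E →L[ℝ] ℝ)
    (hfM : ∀ n, ∀ x ∈ M, f n x = 0)
    (hbi : ∀ n m, f n (z m) = if n = m then 1 else 0)
    (α : ℝ) (hα : 1 < α)
    (h1 : ∀ n, ‖M.mkQ (z n)‖ ≤ α ^ n * ‖f n‖⁻¹)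
    (h2 : ∀ n, ‖T (z n)‖ ≤ (α ^ (2 * n))⁻¹ * ‖M.mkQ (z n)‖)
    (ε : ℕ → ℝ) (hε : ∀ n, 0 < ε n)
    (W : ℕ → Submodule ℝ E) (hWc : ∀ n, IsClosed ((W n : Set E)))
    (hWf : ∀ n, FiniteDimensional ℝ (E ⧸ W n)) :
    ∃ u : ℕ → E, IsBlockSeq z u ∧
      IsNormalizedBasicSeq (fun n => M.mkQ (u n)) ∧
      (∀ n, ∀ i ≤ n, u n ∈ W i) ∧
      (∀ n, ‖T (u n)‖ ≤ ε n) :=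
  stmt19_general T M hM z f hfM hbi α hα h1 h2 ε hε W hWf
end
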